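/- arXiv:2006.14589 — 2 statements merged into one kernel-verified Lean document; each statement's English description precedes it below -/
import Mathlib

section
/- Let M ≅ O(a+1)^{⊕s} ⊕ O(a)^{⊕(n−1−s)} be a balanced globally generated bundle on ℙ¹ with a ≥ 0, let p ∈ ℙ¹, and let M⁰ be the kernel of a general surjection from M to a skyscraper sheaf of length c−1 supported at p (with c−1 ≤ n−1). Then: if a > 0, M⁰ is a direct sum of line bundles of nonnegative degree (hence globally generated up to torsion-free quotient and h⁰(M⁰) = h⁰(M) − (c−1)); if a = 0 and c−1 ≤ s, then M⁰ ≅ O(1)^{⊕(s−c+1)} ⊕ O^{⊕(n−s+c−2)}; if a = 0 and c−1 > s, then M⁰ ≅ O^{⊕(n−c+s)} ⊕ O(−1)^{⊕(c−1−s)}. -/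
/- STATEMENT 7: M ≅ O(a+1)^{⊕s} ⊕ O(a)^{⊕(n−1−s)} on ℙ¹, p a point, and M⁰ the
kernel of a general surjection from M onto a skyscraper of length c−1 at p, i.e.
M⁰ consists of sections of M whose value at p lies in a general subspace
W ⊆ M ⊗ κ(p) of codimension c−1.  We realize H⁰(M(m)) as tuples of polynomials of
degree ≤ dᵢ + m (with p = 0, value at p = constant coefficient), and express that
M⁰ has the claimed splitting type t via its Hilbert function
h⁰(M⁰(m)) = ∑_{x ∈ t} (x + m + 1)⁺ for all twists m. -/

open Polynomial

/-- sections of `⊕ O(d i + m)` whose value at `p = 0` lies in `W`. -/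
noncomputable def kerSections {k : Type*} [Field k] {r : ℕ} (d : Fin r → ℕ)
    (W : Submodule k (Fin r → k)) (m : ℕ) : Submodule k (Fin r → Polynomial k) :=
  (Submodule.pi Set.univ fun i => Polynomial.degreeLE k ((d i + m : ℕ) : WithBot ℕ)) ⊓
    (W.comap (LinearMap.pi fun i => (Polynomial.lcoeff k 0).comp (LinearMap.proj i)))

/-- the Hilbert function of a split bundle with splitting type `t` on ℙ¹. -/
def splitH0 (t : Multiset ℤ) (m : ℕ) : ℕ := (t.map fun x => (x + (m : ℤ) + 1).toNat).sum

open Module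

section helpers

noncomputable def piSubEquiv {R : Type*} [Ring R] {ι : Type*} {M : ι → Type*}
    [∀ i, AddCommGroup (M i)] [∀ i, Module R (M i)] (p : ∀ i, Submodule R (M i)) :
    (Submodule.pi Set.univ p) ≃ₗ[R] ∀ i, p i where
  toFun x i := ⟨x.1 i, x.2 i (Set.mem_univ i)⟩
  map_add' _ _ := rfl
  map_smul' _ _ := rfl
  invFun v := ⟨fun i => (v i : M i), fun i _ => (v i).2⟩
  left_inv _ := rfl
  right_inv _ := rfl

lemma fd_degreeLE (k : Type*) [Field k] (D : ℕ) :
    FiniteDimensional k (degreeLE k (D : WithBot ℕ)) := by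
  rw [← degreeLT_succ_eq_degreeLE]
  exact Module.Finite.equiv (degreeLTEquiv k (D+1)).symm

lemma finrank_degreeLE (k : Type*) [Field k] (D : ℕ) :
    finrank k (degreeLE k (D : WithBot ℕ)) = D + 1 := by
  rw [← degreeLT_succ_eq_degreeLE]
  rw [(degreeLTEquiv k (D+1)).finrank_eq]
  simp

lemma finrank_degreeLE_inf_ker (k : Type*) [Field k] (D : ℕ) :
    finrank k ↥(degreeLE k (D : WithBot ℕ) ⊓ LinearMap.ker (lcoeff k 0)) = D := by
  haveI := fd_degreeLE k D
  set q : Submodule k k[X] := degreeLE k (D : WithBot ℕ) with hq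
  set ψ : q →ₗ[k] k := (lcoeff k 0).comp q.subtype with hψ
  have hcomap : Submodule.comap q.subtype (q ⊓ LinearMap.ker (lcoeff k 0)) = LinearMap.ker ψ := by
    ext x
    simp [hψ, x.2]
  have e1 := Submodule.comapSubtypeEquivOfLe (inf_le_left : q ⊓ LinearMap.ker (lcoeff k 0) ≤ q)
  have hsurj : LinearMap.range ψ = ⊤ := by
    rw [LinearMap.range_eq_top]
    intro c
    refine ⟨⟨C c, ?_⟩, ?_⟩
    · simp [hq, mem_degreeLE]
      exact le_trans degree_C_le (by exact_mod_cast Nat.zero_le D)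
    · simp [hψ]
  have h2 := LinearMap.finrank_range_add_finrank_ker ψ
  rw [hsurj, finrank_top, finrank_self, finrank_degreeLE] at h2
  have : finrank k (Submodule.comap q.subtype (q ⊓ LinearMap.ker (lcoeff k 0))) = finrank k ↥(q ⊓ LinearMap.ker (lcoeff k 0)) := LinearEquiv.finrank_eq e1
  rw [hcomap] at this
  omega

lemma map_range_split (f : ℕ → ℤ) (p q : ℕ) :
    (Multiset.range (p + q)).map f =
      (Multiset.range p).map f + (Multiset.range q).map (fun j => f (p + j)) := by
  rw [Multiset.range_add, Multiset.map_add, Multiset.map_map]; rfl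

lemma map_range_const (f : ℕ → ℤ) (p : ℕ) (cst : ℤ) (h : ∀ j < p, f j = cst) :
    (Multiset.range p).map f = Multiset.replicate p cst := by
  rw [Multiset.map_congr rfl (fun j hj => h j (Multiset.mem_range.mp hj))]
  simp

lemma sum_range_ite_lt {M : Type*} [AddCommMonoid M] (x y : M) (e r : ℕ) (h : e ≤ r) :
    ∑ j ∈ Finset.range r, (if j < e then x else y) = e • x + (r - e) • y := by
  rw [Finset.range_eq_Ico, ← Finset.sum_Ico_consecutive _ (Nat.zero_le e) h]
  rw [Finset.sum_congr rfl (fun j hj => if_pos (Finset.mem_Ico.mp hj).2),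
      Finset.sum_congr (rfl : Finset.Ico e r = _) (fun j hj => if_neg (by
        have := (Finset.mem_Ico.mp hj).1; omega))]
  simp [Nat.card_Ico]

lemma multiset_sum_map_range (f : ℕ → ℤ) (r : ℕ) :
    ((Multiset.range r).map f).sum = ∑ j ∈ Finset.range r, f j := rfl

lemma multiset_sum_map_range' (f : ℕ → ℕ) (r : ℕ) :
    ((Multiset.range r).map f).sum = ∑ j ∈ Finset.range r, f j := rfl

def gfun (a s e : ℕ) : ℕ → ℤ :=
  fun j => (if j < s then (a : ℤ) + 1 else (a : ℤ)) - (if j < e then 1 else 0)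

end helpers

theorem stmt7 {k : Type*} [Field k] [IsAlgClosed k]
    (a s n c : ℕ) (hn : 2 ≤ n) (hs : s ≤ n - 1) (hc : 1 ≤ c) (hcn : c - 1 ≤ n - 1)
    (d : Fin (n - 1) → ℕ) (hd : ∀ i, d i = if (i : ℕ) < s then a + 1 else a) :
    ∃ W : Submodule k (Fin (n - 1) → k), Module.finrank k W = (n - 1) - (c - 1) ∧
      ∃ t : Multiset ℤ, Multiset.card t = n - 1 ∧
        (∀ m : ℕ, Module.finrank k (kerSections d W m) = splitH0 t m) ∧
        (0 < a → (∀ x ∈ t, 0 ≤ x) ∧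
          t.sum = (∑ i, (d i : ℤ)) - (c - 1)) ∧
        (a = 0 → c - 1 ≤ s →
          t = Multiset.replicate (s - (c - 1)) (1 : ℤ) +
              Multiset.replicate (n - 1 - (s - (c - 1))) (0 : ℤ)) ∧
        (a = 0 → s < c - 1 →
          t = Multiset.replicate (n - 1 - (c - 1 - s)) (0 : ℤ) +
              Multiset.replicate (c - 1 - s) (-1 : ℤ)) := by
  set g : ℕ → ℤ := gfun a s (c - 1) with hg
  refine ⟨Submodule.pi Set.univ
      (fun i : Fin (n - 1) => if (i : ℕ) < c - 1 then (⊥ : Submodule k k) else ⊤),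
    ?_, (Multiset.range (n - 1)).map g, ?_, ?_, ?_, ?_, ?_⟩
  · -- finrank W
    rw [(piSubEquiv _).finrank_eq, Module.finrank_pi_fintype]
    have h1 : ∀ i : Fin (n - 1),
        finrank k ↥(if (i : ℕ) < c - 1 then (⊥ : Submodule k k) else ⊤) =
          if (i : ℕ) < c - 1 then 0 else 1 := by
      intro i
      by_cases hic : (i : ℕ) < c - 1
      · rw [if_pos hic, if_pos hic]; exact finrank_bot k k
      · rw [if_neg hic, if_neg hic, finrank_top, finrank_self]
    rw [Finset.sum_congr rfl fun i _ => h1 i,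
      Fin.sum_univ_eq_sum_range (fun j => if j < c - 1 then 0 else 1),
      sum_range_ite_lt 0 1 (c - 1) (n - 1) hcn]
    simp
  · simp
  · -- Hilbert function
    intro m
    have hker : kerSections d
        (Submodule.pi Set.univ
          (fun i : Fin (n - 1) => if (i : ℕ) < c - 1 then (⊥ : Submodule k k) else ⊤)) m =
        Submodule.pi Set.univ (fun i : Fin (n - 1) =>
          if (i : ℕ) < c - 1 then
            degreeLE k ((d i + m : ℕ) : WithBot ℕ) ⊓ LinearMap.ker (lcoeff k 0)
          else degreeLE k ((d i + m : ℕ) : WithBot ℕ)) := by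
      ext x
      simp only [kerSections, Submodule.mem_inf, Submodule.mem_pi, Set.mem_univ,
        forall_true_left, Submodule.mem_comap, LinearMap.pi_apply, LinearMap.comp_apply,
        LinearMap.proj_apply, lcoeff_apply]
      constructor
      · rintro ⟨h1, h2⟩ i
        have h2i := h2 i
        by_cases hi : (i : ℕ) < c - 1
        · rw [if_pos hi] at h2i ⊢
          exact ⟨h1 i, by simpa using h2i⟩
        · rw [if_neg hi]; exact h1 i
      · intro h
        refine ⟨fun i => ?_, fun i => ?_⟩
        · have hi := h i
          by_cases hic : (i : ℕ) < c - 1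
          · rw [if_pos hic] at hi; exact hi.1
          · rwa [if_neg hic] at hi
        · have hi := h i
          by_cases hic : (i : ℕ) < c - 1
          · rw [if_pos hic] at hi ⊢
            simpa using hi.2
          · rw [if_neg hic]; trivial
    rw [hker, (piSubEquiv _).finrank_eq]
    haveI : ∀ i : Fin (n - 1), FiniteDimensional k ↥(
        if (i : ℕ) < c - 1 then
          degreeLE k ((d i + m : ℕ) : WithBot ℕ) ⊓ LinearMap.ker (lcoeff k 0)
        else degreeLE k ((d i + m : ℕ) : WithBot ℕ)) := by
      intro i
      haveI := fd_degreeLE k (d i + m)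
      by_cases hic : (i : ℕ) < c - 1
      · rw [if_pos hic]; exact Submodule.finiteDimensional_of_le inf_le_left
      · rw [if_neg hic]; infer_instance
    rw [Module.finrank_pi_fintype]
    have hcomp : ∀ i : Fin (n - 1),
        finrank k ↥(if (i : ℕ) < c - 1 then
            degreeLE k ((d i + m : ℕ) : WithBot ℕ) ⊓ LinearMap.ker (lcoeff k 0)
          else degreeLE k ((d i + m : ℕ) : WithBot ℕ)) =
        (g (i : ℕ) + m + 1).toNat := by
      intro i
      have hdi := hd i
      by_cases hi : (i : ℕ) < c - 1
      · rw [if_pos hi, finrank_degreeLE_inf_ker, hg]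
        simp only [gfun, if_pos hi, hdi]
        split_ifs <;> omega
      · rw [if_neg hi, finrank_degreeLE, hg]
        simp only [gfun, if_neg hi, hdi]
        split_ifs <;> omega
    rw [Finset.sum_congr rfl fun i _ => hcomp i,
      Fin.sum_univ_eq_sum_range (fun j => (g j + m + 1).toNat)]
    rw [splitH0, Multiset.map_map, multiset_sum_map_range']
    rfl
  · -- a > 0
    intro ha
    constructor
    · intro x hx
      obtain ⟨j, hj, rfl⟩ := Multiset.mem_map.mp hx
      rw [hg]
      simp only [gfun]
      split_ifs <;> omega
    · rw [multiset_sum_map_range, hg]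
      simp only [gfun]
      rw [Finset.sum_sub_distrib,
        sum_range_ite_lt (1 : ℤ) 0 (c - 1) (n - 1) hcn,
        ← Fin.sum_univ_eq_sum_range (fun j => if j < s then (a : ℤ) + 1 else (a : ℤ))]
      have : ∀ i : Fin (n - 1), (if (i : ℕ) < s then (a : ℤ) + 1 else (a : ℤ)) = (d i : ℤ) := by
        intro i
        rw [hd i]; split_ifs <;> push_cast <;> ring
      rw [Finset.sum_congr rfl fun i _ => this i]
      simp only [nsmul_eq_mul, mul_one, smul_zero, add_zero]
      congr 1
      omega
  · -- a = 0, c - 1 ≤ s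
    rintro rfl hcs
    have hsplit : n - 1 = (c - 1) + ((s - (c - 1)) + (n - 1 - s)) := by omega
    conv_lhs => rw [hsplit]
    rw [map_range_split, map_range_split,
      map_range_const g (c - 1) 0 (by intro j hj; rw [hg]; simp only [gfun]; split_ifs <;> omega),
      map_range_const _ (s - (c - 1)) 1 (by intro j hj; rw [hg]; simp only [gfun]; split_ifs <;> omega),
      map_range_const _ (n - 1 - s) 0 (by intro j hj; rw [hg]; simp only [gfun]; split_ifs <;> omega),
      show n - 1 - (s - (c - 1)) = (c - 1) + (n - 1 - s) from by omega,
      Multiset.replicate_add]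
    abel
  · -- a = 0, s < c - 1
    rintro rfl hsc
    have hsplit : n - 1 = s + ((c - 1 - s) + (n - 1 - (c - 1))) := by omega
    conv_lhs => rw [hsplit]
    rw [map_range_split, map_range_split,
      map_range_const g s 0 (by intro j hj; rw [hg]; simp only [gfun]; split_ifs <;> omega),
      map_range_const _ (c - 1 - s) (-1) (by intro j hj; rw [hg]; simp only [gfun]; split_ifs <;> omega),
      map_range_const _ (n - 1 - (c - 1)) 0 (by intro j hj; rw [hg]; simp only [gfun]; split_ifs <;> omega),
      show n - 1 - (c - 1 - s) = s + (n - 1 - (c - 1)) from by omega,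
      Multiset.replicate_add]
    abel
end

section
/- Let Y₀ = (H₁ ∪ ⋯ ∪ H_c) ∩ (H_{c+1} ∪ ⋯ ∪ H_{c+d}) ⊂ ℙⁿ where H₁,…,H_{c+d} are coordinate hyperplanes from a basis, and let f: ℙ¹ → ℙⁿ be given by forms [φ₀ : ⋯ : φ_n] of degree e with all φᵢ ≠ 0. For p ∈ ℙ¹, the condition that f maps the length-a_p subscheme a_p·p into Y₀ is equivalent to: L_p^{a_p} divides ∏_{i∈I(p)} φᵢ and L_p^{a_p} divides ∏_{j∈J(p)} φ_j for some index sets I(p) ⊂ [1,c], J(p) ⊂ [c+1,c+d]; and this imposes exactly 2a_p independent linear-type conditions (codimension 2a_p) on the tuple (φ₀,…,φ_n). -/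
/-!
Since `L = X - C p` is prime in `k[X]`, a divisibility `L ^ a ∣ ∏ φᵢ` distributes over the
factors: it holds iff `L ^ bᵢ ∣ φᵢ` for exponents `bᵢ` summing to `a`. Hence the locus is the union,
over exponent vectors `b` with sum `a` on each of the two blocks, of the linear spaces
`{deg φᵢ ≤ e, L ^ bᵢ ∣ φᵢ}`. Multiplication by `L ^ bᵢ` identifies the `i`-th factor of such a
space with the polynomials of degree `< e + 1 - bᵢ`, so, as `bᵢ ≤ a ≤ e`, its codimension is `∑ bᵢ = 2a`.
-/

open Polynomial Finset

-- Forms of degree `e` on `ℙ¹` are read in the affine chart as polynomials of degree `≤ e`, with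
-- `L_p = X - C p`; the index `i : Fin (c + d)` stands for the hyperplane `H_{i+1}`.
noncomputable def ordPiece {k : Type*} [Field k] (cd e : ℕ) (p : k)
    (b : Fin cd → ℕ) : Submodule k (Fin cd → Polynomial k) :=
  Submodule.pi Set.univ fun i =>
    Polynomial.degreeLE k (e : WithBot ℕ) ⊓
      (Ideal.span {(X - C p) ^ (b i)}).restrictScalars k

section PrimePower

variable {M : Type*} [CommMonoidWithZero M] [IsCancelMulZero M] [DecompositionMonoid M] {π : M}

theorem Prime.exists_pow_dvd_of_pow_dvd_mul (hπ : Prime π) {a : ℕ} {x y : M}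
    (h : π ^ a ∣ x * y) : ∃ u v, u + v = a ∧ π ^ u ∣ x ∧ π ^ v ∣ y := by
  obtain ⟨d₁, d₂, hd₁, hd₂, hd⟩ := exists_dvd_and_dvd_of_dvd_mul h
  obtain ⟨u, -, hu⟩ := (dvd_prime_pow hπ a).1 (hd ▸ dvd_mul_right d₁ d₂)
  obtain ⟨v, -, hv⟩ := (dvd_prime_pow hπ a).1 (hd ▸ dvd_mul_left d₂ d₁)
  have hassoc : Associated (π ^ a) (π ^ (u + v)) := hd ▸ pow_add π u v ▸ hu.mul_mul hv
  refine ⟨u, v, le_antisymm ?_ ?_, hu.symm.dvd.trans hd₁, hv.symm.dvd.trans hd₂⟩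
  · exact (pow_dvd_pow_iff hπ.ne_zero hπ.not_isUnit).1 hassoc.symm.dvd
  · exact (pow_dvd_pow_iff hπ.ne_zero hπ.not_isUnit).1 hassoc.dvd

theorem Prime.exists_pow_dvd_of_pow_dvd_prod {ι : Type*} [DecidableEq ι] (hπ : Prime π)
    {s : Finset ι} {f : ι → M} {a : ℕ}
    (h : π ^ a ∣ ∏ i ∈ s, f i) : ∃ b : ι → ℕ, ∑ i ∈ s, b i = a ∧ ∀ i ∈ s, π ^ b i ∣ f i := by
  induction s using Finset.induction_on generalizing a with
  | empty =>
    have ha : a = 0 := by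
      by_contra ha
      exact hπ.not_isUnit (isUnit_of_dvd_one ((dvd_pow_self π ha).trans (by simpa using h)))
    exact ⟨0, by simp [ha], by simp⟩
  | @insert j s hj ih =>
    rw [prod_insert hj] at h
    obtain ⟨u, v, rfl, hu, hv⟩ := hπ.exists_pow_dvd_of_pow_dvd_mul h
    obtain ⟨b, hb, hbf⟩ := ih hv
    have hb_upd : ∀ i ∈ s, Function.update b j u i = b i := fun i hi =>
      Function.update_of_ne (ne_of_mem_of_not_mem hi hj) _ _
    refine ⟨Function.update b j u, ?_, ?_⟩
    · rw [sum_insert hj, sum_congr rfl hb_upd, hb, Function.update_self]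
    · simp only [mem_insert, forall_eq_or_imp, Function.update_self]
      exact ⟨hu, fun i hi => hb_upd i hi ▸ hbf i hi⟩

end PrimePower

theorem Finset.pow_sum_dvd_prod_of_pow_dvd {M ι : Type*} [CommMonoid M] {π : M} {s : Finset ι}
    {f : ι → M} {b : ι → ℕ} (h : ∀ i ∈ s, π ^ b i ∣ f i) : π ^ ∑ i ∈ s, b i ∣ ∏ i ∈ s, f i :=
  prod_pow_eq_pow_sum s b π ▸ prod_dvd_prod_of_dvd _ _ h

section DegreeLE

variable {R : Type*} [CommRing R] [IsDomain R] {q : R[X]}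

theorem Polynomial.mul_mem_degreeLE_iff (hq : q ≠ 0) {r : R[X]} {e : ℕ} :
    q * r ∈ degreeLE R e ↔ r ∈ degreeLT R (e + 1 - q.natDegree) := by
  rcases eq_or_ne r 0 with rfl | hr
  · simp only [mul_zero, zero_mem]
  rw [mem_degreeLE, mem_degreeLT, ← natDegree_le_iff_degree_le, ← natDegree_lt_iff_degree_lt hr,
    natDegree_mul hq hr]
  omega

theorem Polynomial.degreeLE_inf_span_eq_map (hq : q ≠ 0) (e : ℕ) :
    degreeLE R e ⊓ (Ideal.span {q}).restrictScalars R =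
      (degreeLT R (e + 1 - q.natDegree)).map (LinearMap.mulLeft R q) := by
  ext f
  simp only [Submodule.mem_inf, Submodule.restrictScalars_mem, Ideal.mem_span_singleton,
    Submodule.mem_map, LinearMap.mulLeft_apply]
  constructor
  · rintro ⟨hf, r, rfl⟩
    exact ⟨r, (mul_mem_degreeLE_iff hq).1 hf, rfl⟩
  · rintro ⟨r, hr, rfl⟩
    exact ⟨(mul_mem_degreeLE_iff hq).2 hr, dvd_mul_right q r⟩

noncomputable def Polynomial.degreeLEInfSpanEquiv (hq : q ≠ 0) (e : ℕ) :
    ↥(degreeLE R e ⊓ (Ideal.span {q}).restrictScalars R) ≃ₗ[R]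
      degreeLT R (e + 1 - q.natDegree) :=
  (LinearEquiv.ofEq _ _ (degreeLE_inf_span_eq_map hq e)).trans
    (Submodule.equivMapOfInjective _ (mul_right_injective₀ hq) _).symm

end DegreeLE

def Submodule.piUnivEquiv {R ι : Type*} [Semiring R] {M : ι → Type*}
    [∀ i, AddCommMonoid (M i)] [∀ i, Module R (M i)] (V : ∀ i, Submodule R (M i)) :
    Submodule.pi Set.univ V ≃ₗ[R] ∀ i, V i where
  toFun x i := ⟨x.1 i, x.2 i (Set.mem_univ i)⟩
  map_add' _ _ := rfl
  map_smul' _ _ := rfl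
  invFun y := ⟨fun i => y i, fun i _ => (y i).2⟩

section OrdPiece

variable {k : Type*} [Field k] {cd e : ℕ} {p : k}

theorem mem_ordPiece {b : Fin cd → ℕ} {φ : Fin cd → k[X]} :
    φ ∈ ordPiece cd e p b ↔ ∀ i, φ i ∈ degreeLE k e ∧ (X - C p) ^ b i ∣ φ i := by
  simp [ordPiece, Submodule.mem_pi, Ideal.mem_span_singleton]

theorem finrank_ordPiece (b : Fin cd → ℕ) :
    Module.finrank k (ordPiece cd e p b) = ∑ i, (e + 1 - b i) := by
  have hL : ∀ i, (X - C p) ^ b i ≠ 0 := fun i => pow_ne_zero _ (X_sub_C_ne_zero p)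
  unfold ordPiece
  rw [((Submodule.piUnivEquiv _).trans (LinearEquiv.piCongrRight fun i =>
    degreeLEInfSpanEquiv (hL i) e)).finrank_eq, Module.finrank_pi_fintype]
  simp only [Module.finrank_eq_card_basis (degreeLT.basis k _), Fintype.card_fin, natDegree_pow,
    natDegree_X_sub_C, mul_one]

theorem setOf_pow_dvd_prod_eq_biUnion_ordPiece {s t : Finset (Fin cd)} (hst : Disjoint s t)
    (a : ℕ) :
    {φ : Fin cd → k[X] | (∀ i, φ i ∈ degreeLE k e) ∧
        (X - C p) ^ a ∣ ∏ i ∈ s, φ i ∧ (X - C p) ^ a ∣ ∏ i ∈ t, φ i} =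
      ⋃ b ∈ {b : Fin cd → ℕ | ∑ i ∈ s, b i = a ∧ ∑ i ∈ t, b i = a},
        (ordPiece cd e p b : Set (Fin cd → k[X])) := by
  ext φ
  simp only [Set.mem_ofPred_eq, Set.mem_iUnion, SetLike.mem_coe, exists_prop, mem_ordPiece]
  constructor
  · rintro ⟨hdeg, hs, ht⟩
    obtain ⟨b₁, hb₁, hb₁φ⟩ := Prime.exists_pow_dvd_of_pow_dvd_prod (prime_X_sub_C p) hs
    obtain ⟨b₂, hb₂, hb₂φ⟩ := Prime.exists_pow_dvd_of_pow_dvd_prod (prime_X_sub_C p) ht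
    have hts : ∀ i ∈ t, i ∉ s := fun i hi his => disjoint_left.1 hst his hi
    refine ⟨s.piecewise b₁ (t.piecewise b₂ 0), ⟨?_, ?_⟩, fun i => ⟨hdeg i, ?_⟩⟩
    · rwa [sum_congr rfl fun i hi => s.piecewise_eq_of_mem b₁ (t.piecewise b₂ 0) hi]
    · rwa [sum_congr rfl fun i hi => by
        rw [s.piecewise_eq_of_notMem b₁ _ (hts i hi), t.piecewise_eq_of_mem b₂ 0 hi]]
    · by_cases his : i ∈ s
      · simpa [his] using hb₁φ i his
      by_cases hit : i ∈ t
      · simpa [his, hit] using hb₂φ i hit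
      · simp [his, hit]
  · rintro ⟨b, ⟨hbs, hbt⟩, hφ⟩
    exact ⟨fun i => (hφ i).1, hbs ▸ Finset.pow_sum_dvd_prod_of_pow_dvd fun i _ => (hφ i).2,
      hbt ▸ Finset.pow_sum_dvd_prod_of_pow_dvd fun i _ => (hφ i).2⟩

end OrdPiece

theorem stmt16_general {k : Type*} [Field k] (c d e a : ℕ)
    (hae : a ≤ e)
    (p : k) :
    -- (1) equivalence with the index-set formulation, for tuples of nonzero forms
    (∀ φ : Fin (c + d) → Polynomial k, (∀ i, φ i ≠ 0) →
      (((X - C p) ^ a ∣ ∏ i ∈ filter (fun i : Fin (c + d) => (i : ℕ) < c) univ, φ i ∧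
        (X - C p) ^ a ∣ ∏ i ∈ filter (fun i : Fin (c + d) => c ≤ (i : ℕ)) univ, φ i) ↔
       ∃ I J : Finset (Fin (c + d)),
         (∀ i ∈ I, (i : ℕ) < c) ∧ (∀ j ∈ J, c ≤ (j : ℕ)) ∧
         (X - C p) ^ a ∣ ∏ i ∈ I, φ i ∧ (X - C p) ^ a ∣ ∏ j ∈ J, φ j)) ∧
    -- (2) the locus is a union of linear subspaces ...
    ({φ : Fin (c + d) → Polynomial k |
        (∀ i, φ i ∈ Polynomial.degreeLE k (e : WithBot ℕ)) ∧
        (X - C p) ^ a ∣ ∏ i ∈ filter (fun i : Fin (c + d) => (i : ℕ) < c) univ, φ i ∧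
        (X - C p) ^ a ∣ ∏ i ∈ filter (fun i : Fin (c + d) => c ≤ (i : ℕ)) univ, φ i} =
      ⋃ b ∈ {b : Fin (c + d) → ℕ |
          ∑ i ∈ filter (fun i : Fin (c + d) => (i : ℕ) < c) univ, b i = a ∧
          ∑ i ∈ filter (fun i : Fin (c + d) => c ≤ (i : ℕ)) univ, b i = a},
        (ordPiece (c + d) e p b : Set (Fin (c + d) → Polynomial k))) ∧
    -- (3) ... each of codimension exactly 2a
    (∀ b : Fin (c + d) → ℕ,
      ∑ i ∈ filter (fun i : Fin (c + d) => (i : ℕ) < c) univ, b i = a →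
      ∑ i ∈ filter (fun i : Fin (c + d) => c ≤ (i : ℕ)) univ, b i = a →
      Module.finrank k (ordPiece (c + d) e p b) = (c + d) * (e + 1) - 2 * a) := by
  refine ⟨fun φ _ => ⟨fun ⟨hI, hJ⟩ => ⟨_, _, fun i hi => (mem_filter.1 hi).2,
      fun j hj => (mem_filter.1 hj).2, hI, hJ⟩, ?_⟩,
    setOf_pow_dvd_prod_eq_biUnion_ordPiece (disjoint_filter.2 fun _ _ h => not_le.2 h) a, ?_⟩
  · rintro ⟨I, J, hI, hJ, hIφ, hJφ⟩
    exact ⟨hIφ.trans (prod_dvd_prod_of_subset _ _ φ fun i hi => by simpa using hI i hi),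
      hJφ.trans (prod_dvd_prod_of_subset _ _ φ fun j hj => by simpa using hJ j hj)⟩
  · intro b hb₁ hb₂
    have hsum : ∑ i, b i = 2 * a := by
      rw [← sum_filter_add_sum_filter_not univ (fun i : Fin (c + d) => (i : ℕ) < c), hb₁]
      simp only [not_lt, hb₂]
      ring
    have hb_le : ∀ i, b i ≤ e + 1 := fun i => by
      have hba : b i ≤ a := by
        obtain hi | hi := lt_or_ge (i : ℕ) c
        · exact hb₁ ▸ single_le_sum (fun j _ => Nat.zero_le (b j)) (by simpa using hi)
        · exact hb₂ ▸ single_le_sum (fun j _ => Nat.zero_le (b j)) (by simpa using hi)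
      omega
    rw [finrank_ordPiece, sum_tsub_distrib _ fun i _ => hb_le i, hsum]
    simp [mul_comm]

theorem stmt16 {k : Type*} [Field k] (n c d e a : ℕ)
    (hc : 1 ≤ c) (hd : 1 ≤ d) (hcd : c + d ≤ n) (ha : 1 ≤ a) (hae : a ≤ e)
    (p : k) :
    -- (1) equivalence with the index-set formulation, for tuples of nonzero forms
    (∀ φ : Fin (c + d) → Polynomial k, (∀ i, φ i ≠ 0) →
      (((X - C p) ^ a ∣ ∏ i ∈ filter (fun i : Fin (c + d) => (i : ℕ) < c) univ, φ i ∧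
        (X - C p) ^ a ∣ ∏ i ∈ filter (fun i : Fin (c + d) => c ≤ (i : ℕ)) univ, φ i) ↔
       ∃ I J : Finset (Fin (c + d)),
         (∀ i ∈ I, (i : ℕ) < c) ∧ (∀ j ∈ J, c ≤ (j : ℕ)) ∧
         (X - C p) ^ a ∣ ∏ i ∈ I, φ i ∧ (X - C p) ^ a ∣ ∏ j ∈ J, φ j)) ∧
    -- (2) the locus is a union of linear subspaces ...
    ({φ : Fin (c + d) → Polynomial k |
        (∀ i, φ i ∈ Polynomial.degreeLE k (e : WithBot ℕ)) ∧
        (X - C p) ^ a ∣ ∏ i ∈ filter (fun i : Fin (c + d) => (i : ℕ) < c) univ, φ i ∧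
        (X - C p) ^ a ∣ ∏ i ∈ filter (fun i : Fin (c + d) => c ≤ (i : ℕ)) univ, φ i} =
      ⋃ b ∈ {b : Fin (c + d) → ℕ |
          ∑ i ∈ filter (fun i : Fin (c + d) => (i : ℕ) < c) univ, b i = a ∧
          ∑ i ∈ filter (fun i : Fin (c + d) => c ≤ (i : ℕ)) univ, b i = a},
        (ordPiece (c + d) e p b : Set (Fin (c + d) → Polynomial k))) ∧
    -- (3) ... each of codimension exactly 2a
    (∀ b : Fin (c + d) → ℕ,
      ∑ i ∈ filter (fun i : Fin (c + d) => (i : ℕ) < c) univ, b i = a →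
      ∑ i ∈ filter (fun i : Fin (c + d) => c ≤ (i : ℕ)) univ, b i = a →
      Module.finrank k (ordPiece (c + d) e p b) = (c + d) * (e + 1) - 2 * a) :=
  stmt16_general c d e a hae p
end
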